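/- For each k ∈ ℤ, the cluster pre-variable x_k, regarded as a Laurent polynomial in x₁, x₂ over k[p_{1,1},…,p_{1,ℓ₁}, p_{1,ℓ₁}^{-1}, p_{2,1},…,p_{2,ℓ₂}, p_{2,ℓ₂}^{-1}], has a unique term of minimal total degree in x₁, x₂, and there exist integers a_k, b_k such that the element X_k = p_{1,ℓ₁}^{a_k}·p_{2,ℓ₂}^{b_k}·x_k has this unique minimal total-degree term with coefficient 1. (This makes the generalized cluster variables X_k well defined.) -/

import Mathlib

attribute [local instance] Classical.propDecidable

noncomputable section

namespace GCA

/-- The variables: `Sum.inl (i, j)` is the coefficient indeterminate `p_{i+1,j}` (only those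
with `1 ≤ j ≤ ℓ_{i+1}` are used), and `Sum.inr i` is the cluster variable `x_{i+1}`. -/
abbrev Vars := (Fin 2 × ℕ) ⊕ Fin 2

/-- The ambient rational function field `k(p_{1,1},…,p_{2,ℓ₂})(x₁,x₂)`. -/
abbrev FF (K : Type) [Field K] := FractionRing (MvPolynomial Vars K)

variable (K : Type) [Field K]

/-- The image in `FF K` of a polynomial variable. -/
def ev (v : Vars) : FF K := algebraMap (MvPolynomial Vars K) (FF K) (MvPolynomial.X v)

/-- The coefficient indeterminate `p_{i+1,j}` (for `i : Fin 2`, `j ≥ 1`). -/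
def p (i : Fin 2) (j : ℕ) : FF K := ev K (.inl (i, j))

/-- The initial cluster variable `x₁`. -/
def x1 : FF K := ev K (.inr 0)

/-- The initial cluster variable `x₂`. -/
def x2 : FF K := ev K (.inr 1)

/-- The image of the ground field `k` in `FF K`. -/
def KImage : Set (FF K) :=
  Set.range fun c : K => algebraMap (MvPolynomial Vars K) (FF K) (MvPolynomial.C c)

/-- The set of coefficient indeterminates `p_{1,1},…,p_{1,ℓ₁},p_{2,1},…,p_{2,ℓ₂}`. -/
def pGens (ℓ₁ ℓ₂ : ℕ) : Set (FF K) :=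
  (fun j => p K 0 j) '' Set.Icc 1 ℓ₁ ∪ (fun j => p K 1 j) '' Set.Icc 1 ℓ₂

variable (ℓ₁ ℓ₂ : ℕ)

/-- The exchange polynomial `P₁(z) = 1 + p_{1,1}z + ⋯ + p_{1,ℓ₁}z^{ℓ₁}`. -/
def P1 (z : FF K) : FF K := 1 + ∑ j ∈ Finset.Icc 1 ℓ₁, p K 0 j * z ^ j

/-- The exchange polynomial `P₂(z) = 1 + p_{2,1}z + ⋯ + p_{2,ℓ₂}z^{ℓ₂}`. -/
def P2 (z : FF K) : FF K := 1 + ∑ j ∈ Finset.Icc 1 ℓ₂, p K 1 j * z ^ j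

/-- `P̄₁(z) = p_{1,ℓ₁}^{-1}·z^{ℓ₁}·P₁(z^{-1})`. -/
def P1bar (z : FF K) : FF K := (p K 0 ℓ₁)⁻¹ * z ^ ℓ₁ * P1 K ℓ₁ z⁻¹

/-- `P̄₂(z) = p_{2,ℓ₂}^{-1}·z^{ℓ₂}·P₂(z^{-1})`. -/
def P2bar (z : FF K) : FF K := (p K 1 ℓ₂)⁻¹ * z ^ ℓ₂ * P2 K ℓ₂ z⁻¹

/-- `x : ℤ → FF K` is the family of cluster pre-variables: `x 1 = x₁`, `x 2 = x₂`, and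
`x_{k+1}·x_{k−1} = P₁(x_k), P₂(x_k), P̄₁(x_k), P̄₂(x_k)` according as
`k ≡ 1, 2, 3, 0 (mod 4)`. -/
def IsPreVarSeq (x : ℤ → FF K) : Prop :=
  x 1 = x1 K ∧ x 2 = x2 K ∧ ∀ k : ℤ,
    x (k + 1) * x (k - 1) =
      if k % 4 = 1 then P1 K ℓ₁ (x k)
      else if k % 4 = 2 then P2 K ℓ₂ (x k)
      else if k % 4 = 3 then P1bar K ℓ₁ (x k)
      else P2bar K ℓ₂ (x k)

/-- The coefficient ring `k[p_{1,1},…,p_{1,ℓ₁},p_{1,ℓ₁}^{-1},p_{2,1},…,p_{2,ℓ₂},p_{2,ℓ₂}^{-1}]`,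
as a subring of `FF K`. -/
def CoeffRing : Subring (FF K) :=
  Subring.closure (KImage K ∪ pGens K ℓ₁ ℓ₂ ∪ {(p K 0 ℓ₁)⁻¹, (p K 1 ℓ₂)⁻¹})

/-- The Laurent polynomial ring
`k[p_{1,1},…,p_{1,ℓ₁},p_{1,ℓ₁}^{-1},p_{2,1},…,p_{2,ℓ₂},p_{2,ℓ₂}^{-1}][x₁^{±1},x₂^{±1}]`,
as a subring of `FF K`. -/
def LaurentRing : Subring (FF K) :=
  Subring.closure (KImage K ∪ pGens K ℓ₁ ℓ₂ ∪
    {(p K 0 ℓ₁)⁻¹, (p K 1 ℓ₂)⁻¹, x1 K, (x1 K)⁻¹, x2 K, (x2 K)⁻¹})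

end GCA

/-!
Realise Laurent polynomials in `x₁, x₂` over the coefficient ring as `AddMonoidAlgebra` over
`ℤ × ℤ`; as `x₁, x₂` are algebraically independent over `k(p)`, evaluation embeds them into the
function field. Two facts then travel along the sequence, four consecutive terms at a time and in
both directions.

*Laurent phenomenon.* From `x_{k+2} x_k = P(x_{k+1})` and `x_{k+3} x_{k+1} = P'(x_{k+2})` with
`P'(0) = 1`, the element `x_{k+3}` inverts `x_{k+1}` modulo `x_{k+2}`, so `x_{k+2}` divides the
reversal of `P` evaluated at `x_{k+3}`; up to a unit this is the next exchange polynomial, whence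
`x_{k+4} = P''(x_{k+3}) / x_{k+2}` is again a Laurent polynomial.

*Lowest terms.* If `x_{k+2}, x_{k+3}` have unique lowest terms with exponents `u, v` and
coefficients monomials in `p_{1,ℓ₁}^{±1}, p_{2,ℓ₂}^{±1}`, then `P''(x_{k+3})` has a unique lowest
term, of exponent `ℓ • v` (with `ℓ = deg P''`) or `0` according as the total degree of `v` is
negative or positive, and cancelling `x_{k+2}` shows that `x_{k+4}` has one of exponent `ℓ • v - u`
or `-u`. The total degree
never vanishes: the quadratic form `q(u) = ℓ₂u₁² + ℓ₁u₂² - ℓ₁ℓ₂u₁u₂` takes the values `ℓ₁, ℓ₂` on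
these exponents (an invariant kept together with a sign condition on the polar form of consecutive
exponents), whereas `q(u) = (ℓ₁ + ℓ₂ + ℓ₁ℓ₂) u₁²` when `u₁ + u₂ = 0`.
-/

namespace AddMonoidAlgebra

variable {R G : Type*} [CommRing R] [AddCommGroup G] (deg : G →+ ℤ)

def IsLowestTerm (f : AddMonoidAlgebra R G) (e : G) : Prop :=
  e ∈ f.coeff.support ∧ ∀ d ∈ f.coeff.support, d ≠ e → deg e < deg d

variable {deg} {f g t : AddMonoidAlgebra R G} {e e' : G}

lemma IsLowestTerm.deg_le (hf : IsLowestTerm deg f e) {d : G} (hd : d ∈ f.coeff.support) :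
    deg e ≤ deg d := by
  rcases eq_or_ne d e with rfl | hne
  · exact le_rfl
  · exact (hf.2 d hd hne).le

lemma isLowestTerm_single {r : R} (hr : r ≠ 0) (e : G) : IsLowestTerm deg (single e r) e := by
  classical
  simp only [IsLowestTerm, coeff_single, Finsupp.support_single _ hr, Finset.mem_singleton]
  exact ⟨trivial, fun d hd hne => absurd hd hne⟩

lemma IsLowestTerm.uniqueAdd (hf : IsLowestTerm deg f e)
    (hg : ∀ d ∈ g.coeff.support, deg e' ≤ deg d) :
    UniqueAdd f.coeff.support g.coeff.support e e' := by
  intro a b ha hb hab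
  have hdeg : deg a + deg b = deg e + deg e' := by rw [← map_add, ← map_add, hab]
  have hae : a = e := by
    by_contra hne
    linarith [hf.2 a ha hne, hg b hb]
  subst hae
  exact ⟨rfl, add_left_cancel hab⟩

lemma IsLowestTerm.coeff_mul (hf : IsLowestTerm deg f e) (hg : IsLowestTerm deg g e') :
    (f * g).coeff (e + e') = f.coeff e * g.coeff e' :=
  coeff_mul_add_of_uniqueAdd (hf.uniqueAdd fun _ => hg.deg_le)

lemma deg_le_of_mem_support_mul {m n : ℤ} (hf : ∀ d ∈ f.coeff.support, m ≤ deg d)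
    (hg : ∀ d ∈ g.coeff.support, n ≤ deg d) {d : G} (hd : d ∈ (f * g).coeff.support) :
    m + n ≤ deg d := by
  classical
  obtain ⟨a, ha, b, hb, rfl⟩ := Finset.mem_add.1 (support_coeff_mul_subset f g hd)
  rw [map_add]
  exact add_le_add (hf a ha) (hg b hb)

lemma lt_deg_of_mem_support_sum {ι : Type*} {s : Finset ι} {F : ι → AddMonoidAlgebra R G}
    {m : ℤ} (h : ∀ i ∈ s, ∀ d ∈ (F i).coeff.support, m < deg d) :
    ∀ d ∈ (∑ i ∈ s, F i).coeff.support, m < deg d := by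
  classical
  intro d hd
  rw [coeff_sum] at hd
  obtain ⟨i, hi, hd⟩ := Finset.mem_biUnion.1 (Finsupp.support_finsetSum hd)
  exact h i hi d hd

lemma IsLowestTerm.add (hf : IsLowestTerm deg f e) (hg : ∀ d ∈ g.coeff.support, deg e < deg d) :
    IsLowestTerm deg (f + g) e ∧ (f + g).coeff e = f.coeff e := by
  classical
  have hge : g.coeff e = 0 := Finsupp.notMem_support_iff.1 fun h => lt_irrefl _ (hg e h)
  have hcoeff : (f + g).coeff e = f.coeff e := by
    rw [coeff_add, Finsupp.add_apply, hge, add_zero]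
  refine ⟨⟨?_, fun d hd hne => ?_⟩, hcoeff⟩
  · rw [Finsupp.mem_support_iff, hcoeff]
    exact Finsupp.mem_support_iff.1 hf.1
  · rw [coeff_add] at hd
    rcases Finset.mem_union.1 (Finsupp.support_add hd) with h | h
    exacts [hf.2 d h hne, hg d h]

variable [IsDomain R]

lemma IsLowestTerm.mul (hf : IsLowestTerm deg f e) (hg : IsLowestTerm deg g e') :
    IsLowestTerm deg (f * g) (e + e') := by
  refine ⟨?_, fun d hd hne => ?_⟩
  · rw [Finsupp.mem_support_iff, hf.coeff_mul hg]
    exact mul_ne_zero (Finsupp.mem_support_iff.1 hf.1) (Finsupp.mem_support_iff.1 hg.1)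
  · classical
    obtain ⟨a, ha, b, hb, rfl⟩ := Finset.mem_add.1 (support_coeff_mul_subset f g hd)
    rw [map_add, map_add]
    rcases eq_or_ne a e with rfl | hae
    · linarith [hg.2 b hb fun h => hne (by rw [h])]
    · linarith [hf.2 a ha hae, hg.deg_le hb]

lemma IsLowestTerm.pow (hf : IsLowestTerm deg f e) (n : ℕ) :
    IsLowestTerm deg (f ^ n) (n • e) ∧ (f ^ n).coeff (n • e) = f.coeff e ^ n := by
  induction n with
  | zero =>
    simpa [one_def] using isLowestTerm_single (R := R) (deg := deg) one_ne_zero (0 : G)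
  | succ n ih =>
    rw [pow_succ, succ_nsmul, pow_succ, ← ih.2]
    exact ⟨ih.1.mul hf, ih.1.coeff_mul hf⟩

lemma IsLowestTerm.deg_le_of_mem_support_pow (hf : IsLowestTerm deg f e) (n : ℕ) {d : G}
    (hd : d ∈ (f ^ n).coeff.support) : n * deg e ≤ deg d := by
  simpa using (hf.pow n).1.deg_le hd

lemma IsLowestTerm.smul (hf : IsLowestTerm deg f e) {r : R} (hr : r ≠ 0) :
    IsLowestTerm deg (r • f) e := by
  refine ⟨?_, fun d hd hne => hf.2 d (Finsupp.support_smul hd) hne⟩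
  rw [coeff_smul, Finsupp.mem_support_iff, Finsupp.smul_apply, smul_eq_mul]
  exact mul_ne_zero hr (Finsupp.mem_support_iff.1 hf.1)

lemma IsLowestTerm.of_mul (h : IsLowestTerm deg (g * t) e) (hg : IsLowestTerm deg g e') :
    IsLowestTerm deg t (e - e') := by
  classical
  have ht : t.coeff.support.Nonempty := by
    rw [Finsupp.support_nonempty_iff, Ne, coeff_eq_zero]
    rintro rfl
    simpa using h.1
  obtain ⟨s, hs, hsmin⟩ := Finset.exists_min_image _ deg ht
  -- a term of `t` of minimal degree meets the lowest term of `g` in a term of `g * t` that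
  -- survives and has degree at most `deg e`, so it is the lowest term of `g * t`
  have hmin : ∀ d ∈ t.coeff.support, deg d ≤ deg s → d = e - e' := by
    intro d hd hds
    have hdmin : ∀ d' ∈ t.coeff.support, deg d ≤ deg d' := fun d' hd' =>
      hds.trans (hsmin d' hd')
    have hmem : e' + d ∈ (g * t).coeff.support := by
      rw [Finsupp.mem_support_iff, coeff_mul_add_of_uniqueAdd (hg.uniqueAdd hdmin)]
      exact mul_ne_zero (Finsupp.mem_support_iff.1 hg.1) (Finsupp.mem_support_iff.1 hd)
    have hle : deg e' + deg d ≤ deg e :=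
      deg_le_of_mem_support_mul (fun _ => hg.deg_le) hdmin h.1
    by_contra hne
    have := h.2 _ hmem fun heq => hne (by rw [← heq]; abel)
    rw [map_add] at this
    omega
  obtain rfl := hmin s hs le_rfl
  exact ⟨hs, fun d hd hne => lt_of_le_of_ne (hsmin d hd) fun heq => hne (hmin d hd heq.ge)⟩

lemma IsLowestTerm.aeval_of_deg_neg (hf : IsLowestTerm deg f e) (he : deg e < 0)
    {Q : Polynomial R} (hQ : Q ≠ 0) :
    IsLowestTerm deg (Polynomial.aeval f Q) (Q.natDegree • e) ∧
      (Polynomial.aeval f Q).coeff (Q.natDegree • e) =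
        Q.leadingCoeff * f.coeff e ^ Q.natDegree := by
  have hpow := hf.pow Q.natDegree
  rw [Polynomial.aeval_eq_sum_range, Finset.sum_range_succ, add_comm]
  have hlead := hpow.1.smul (Polynomial.leadingCoeff_ne_zero.2 hQ)
  refine (hlead.add (lt_deg_of_mem_support_sum fun i hi d hd => ?_)).imp_right ?_
  · have hi : (i : ℤ) < Q.natDegree := by exact_mod_cast Finset.mem_range.1 hi
    have := hf.deg_le_of_mem_support_pow i (Finsupp.support_smul hd)
    rw [map_nsmul, nsmul_eq_mul]
    nlinarith
  · intro h
    refine h.trans ?_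
    rw [coeff_smul, Finsupp.smul_apply, hpow.2, smul_eq_mul]

lemma IsLowestTerm.aeval_of_deg_pos (hf : IsLowestTerm deg f e) (he : 0 < deg e)
    {Q : Polynomial R} (hQ : Q.coeff 0 ≠ 0) :
    IsLowestTerm deg (Polynomial.aeval f Q) 0 ∧ (Polynomial.aeval f Q).coeff 0 = Q.coeff 0 := by
  rw [Polynomial.aeval_eq_sum_range, Finset.sum_range_succ', add_comm, pow_zero, one_def,
    smul_single, smul_eq_mul, mul_one]
  refine (isLowestTerm_single hQ 0).add (lt_deg_of_mem_support_sum fun i _ d hd => ?_)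
    |>.imp_right fun h => by rw [h, coeff_single, Finsupp.single_eq_same]
  have := hf.deg_le_of_mem_support_pow (i + 1) (Finsupp.support_smul hd)
  rw [map_zero]
  push_cast at this
  nlinarith

variable (deg) in
def HasLowestTermIn (H : Subgroup Rˣ) (f : AddMonoidAlgebra R G) (e : G) : Prop :=
  IsLowestTerm deg f e ∧ ∃ u ∈ H, (u : R) = f.coeff e

variable {H : Subgroup Rˣ}

lemma hasLowestTermIn_single {u : Rˣ} (hu : u ∈ H) (e : G) :
    HasLowestTermIn deg H (single e (u : R)) e :=
  ⟨isLowestTerm_single u.ne_zero e, u, hu, by rw [coeff_single, Finsupp.single_eq_same]⟩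

lemma HasLowestTermIn.mul (hf : HasLowestTermIn deg H f e) (hg : HasLowestTermIn deg H g e') :
    HasLowestTermIn deg H (f * g) (e + e') := by
  obtain ⟨hf, u, hu, hfu⟩ := hf
  obtain ⟨hg, v, hv, hgv⟩ := hg
  exact ⟨hf.mul hg, u * v, H.mul_mem hu hv, by rw [hf.coeff_mul hg, Units.val_mul, hfu, hgv]⟩

lemma HasLowestTermIn.of_mul (h : HasLowestTermIn deg H (g * t) e)
    (hg : HasLowestTermIn deg H g e') : HasLowestTermIn deg H t (e - e') := by
  obtain ⟨h, u, hu, hgtu⟩ := h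
  obtain ⟨hg, v, hv, hgv⟩ := hg
  have ht := h.of_mul hg
  refine ⟨ht, v⁻¹ * u, H.mul_mem (H.inv_mem hv) hu, ?_⟩
  have hcoeff := hg.coeff_mul ht
  rw [add_sub_cancel] at hcoeff
  rw [Units.val_mul, hgtu, hcoeff, ← hgv, Units.inv_mul_cancel_left]

lemma HasLowestTermIn.aeval_of_deg_neg (hf : HasLowestTermIn deg H f e) (he : deg e < 0)
    {Q : Polynomial R} (hQ : ∃ u ∈ H, (u : R) = Q.leadingCoeff) :
    HasLowestTermIn deg H (Polynomial.aeval f Q) (Q.natDegree • e) := by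
  obtain ⟨hf, u, hu, hfu⟩ := hf
  obtain ⟨v, hv, hQv⟩ := hQ
  have hQ0 : Q ≠ 0 := Polynomial.leadingCoeff_ne_zero.1 (hQv ▸ v.ne_zero)
  obtain ⟨h, hcoeff⟩ := hf.aeval_of_deg_neg he hQ0
  exact ⟨h, v * u ^ Q.natDegree, H.mul_mem hv (H.pow_mem hu _), by
    rw [hcoeff, Units.val_mul, Units.val_pow_eq_pow_val, hQv, hfu]⟩

lemma HasLowestTermIn.aeval_of_deg_pos (hf : HasLowestTermIn deg H f e)
    (he : 0 < deg e) {Q : Polynomial R} (hQ : Q.coeff 0 = 1) :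
    HasLowestTermIn deg H (Polynomial.aeval f Q) 0 := by
  obtain ⟨h, hcoeff⟩ := hf.1.aeval_of_deg_pos he (hQ ▸ one_ne_zero)
  exact ⟨h, 1, H.one_mem, by rw [hcoeff, hQ, Units.val_one]⟩

end AddMonoidAlgebra

open Polynomial in
lemma Polynomial.dvd_aeval_reflect {R S : Type*} [CommRing R] [CommRing S] [Algebra R S]
    {g y w z : S} {P Q : R[X]} {N : ℕ} (hyw : y * w = aeval g Q) (hQ : Q.coeff 0 = 1)
    (hgz : g * z = aeval w P) (hN : P.natDegree ≤ N) : g ∣ aeval y (reflect N P) := by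
  -- modulo `g`, `y` inverts `w` and `P` vanishes at `w`, so `reflect N P` vanishes at `y`
  let π := Ideal.Quotient.mk (Ideal.span {g})
  have hπ : ∀ (s : S) (Q : R[X]), π (aeval s Q) = eval₂ (π.comp (algebraMap R S)) (π s) Q :=
    fun s Q => by rw [aeval_def, hom_eval₂]
  have hg : π g = 0 := Ideal.Quotient.eq_zero_iff_mem.2 (Ideal.mem_span_singleton_self g)
  have hyw' : π y * π w = 1 := by
    rw [← map_mul, hyw, hπ, hg, eval₂_at_zero, hQ, map_one]
  let _ : Invertible (π w) := ⟨π y, hyw', by rw [mul_comm, hyw']⟩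
  have h := (eval₂_reflect_eq_zero_iff _ (π w) N P hN).2
    (by rw [← hπ, ← hgz, map_mul, hg, zero_mul])
  rw [← Ideal.mem_span_singleton, ← Ideal.Quotient.eq_zero_iff_mem, hπ]
  exact h

lemma MvPolynomial.aeval_monomial_single_add_single {E L : Type*} [CommRing E] [CommRing L]
    [Algebra E L] (x : Fin 2 → L) (a b : ℕ) (c : E) :
    aeval x (monomial (Finsupp.single 0 a + Finsupp.single 1 b) c) =
      algebraMap E L c * (x 0 ^ a * x 1 ^ b) := by
  rw [aeval_monomial, Finsupp.prod_add_index' (fun _ => pow_zero _) (fun _ _ _ => pow_add _ _ _)]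
  simp only [Finsupp.prod_single_index, pow_zero]

lemma Subring.zpow_mem_of_inv_mem {F : Type*} [DivisionRing F] (S : Subring F) {z : F}
    (hz : z ∈ S) (hz' : z⁻¹ ∈ S) (n : ℤ) : z ^ n ∈ S := by
  cases n with
  | ofNat n => simpa using pow_mem hz n
  | negSucc n => simpa [zpow_negSucc, ← inv_pow] using pow_mem hz' (n + 1)

lemma AlgebraicIndependent.linearIndependent_zpow_mul_zpow {E L : Type*} [Field E] [Field L]
    [Algebra E L] {x : Fin 2 → L} (hx : AlgebraicIndependent E x) :
    LinearIndependent E fun d : ℤ × ℤ => x 0 ^ d.1 * x 1 ^ d.2 := by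
  classical
  rw [linearIndependent_iff']
  intro s g hs
  obtain ⟨N, hN⟩ : ∃ N : ℕ, ∀ d ∈ s, 0 ≤ d.1 + N ∧ 0 ≤ d.2 + N := by
    refine ⟨∑ d ∈ s, (d.1.natAbs + d.2.natAbs), fun d hd => ?_⟩
    have := Finset.single_le_sum (f := fun d : ℤ × ℤ => d.1.natAbs + d.2.natAbs)
      (fun _ _ => Nat.zero_le _) hd
    omega
  -- multiplying by `(x 0 * x 1) ^ N` turns the relation into a polynomial one
  let m : ℤ × ℤ → Fin 2 →₀ ℕ := fun d =>
    Finsupp.single 0 (d.1 + N).toNat + Finsupp.single 1 (d.2 + N).toNat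
  have hP : ∑ d ∈ s, MvPolynomial.monomial (m d) (g d) = 0 := by
    refine hx ?_
    rw [map_sum, map_zero, ← mul_zero ((x 0 * x 1) ^ N), ← hs, Finset.mul_sum]
    refine Finset.sum_congr rfl fun d hd => ?_
    rw [MvPolynomial.aeval_monomial_single_add_single, ← zpow_natCast, ← zpow_natCast,
      Int.toNat_of_nonneg (hN d hd).1, Int.toNat_of_nonneg (hN d hd).2,
      zpow_add₀ (hx.ne_zero 0), zpow_add₀ (hx.ne_zero 1), Algebra.smul_def]
    simp only [zpow_natCast]
    ring
  intro d hd
  have hcoeff := congrArg (MvPolynomial.coeff (m d)) hP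
  rwa [MvPolynomial.coeff_sum, Finset.sum_eq_single d, MvPolynomial.coeff_monomial,
    if_pos rfl] at hcoeff
  · intro d' hd' hne
    rw [MvPolynomial.coeff_monomial, if_neg]
    intro heq
    have e0 := congrArg (· 0) heq
    have e1 := congrArg (· 1) heq
    simp only [m, Finsupp.add_apply, Finsupp.single_apply] at e0 e1
    norm_num at e0 e1
    have := hN d hd
    have := hN d' hd'
    exact hne (Prod.ext (by omega) (by omega))
  · exact fun h => absurd hd h

namespace GCA

open Polynomial

section Exponents

variable (ℓ₁ ℓ₂ : ℕ)

def quadForm (u : ℤ × ℤ) : ℤ := ℓ₂ * u.1 ^ 2 + ℓ₁ * u.2 ^ 2 - ℓ₁ * ℓ₂ * u.1 * u.2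

def polarForm (u v : ℤ × ℤ) : ℤ := quadForm ℓ₁ ℓ₂ (u + v) - quadForm ℓ₁ ℓ₂ u - quadForm ℓ₁ ℓ₂ v

def nextExponent (N : ℕ) (u v : ℤ × ℤ) : ℤ × ℤ := if v.1 + v.2 < 0 then N • v - u else -u

def PairInvariant (a b : ℕ) (u v : ℤ × ℤ) : Prop :=
  quadForm ℓ₁ ℓ₂ u = a ∧ quadForm ℓ₁ ℓ₂ v = b ∧
    polarForm ℓ₁ ℓ₂ u v = if 0 < u.1 + u.2 ∧ 0 < v.1 + v.2 then -(a * b : ℤ) else a * b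

variable {ℓ₁ ℓ₂}

lemma totalDeg_ne_zero_of_quadForm {u : ℤ × ℤ} (hpos : 0 < quadForm ℓ₁ ℓ₂ u)
    (hlt : quadForm ℓ₁ ℓ₂ u < ℓ₁ + ℓ₂ + ℓ₁ * ℓ₂) : u.1 + u.2 ≠ 0 := by
  intro h
  have hu : u.2 = -u.1 := by omega
  rw [quadForm, hu] at hpos hlt
  have h1 : 0 < u.1 ^ 2 := by nlinarith
  nlinarith

variable {a b : ℕ} {u v : ℤ × ℤ}

lemma PairInvariant.symm (h : PairInvariant ℓ₁ ℓ₂ a b u v) : PairInvariant ℓ₁ ℓ₂ b a v u := by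
  obtain ⟨hu, hv, huv⟩ := h
  refine ⟨hv, hu, ?_⟩
  rw [show polarForm ℓ₁ ℓ₂ v u = polarForm ℓ₁ ℓ₂ u v by simp only [polarForm, add_comm]; ring,
    huv, mul_comm]
  exact if_congr and_comm rfl rfl

variable (hab : (a = ℓ₁ ∧ b = ℓ₂) ∨ (a = ℓ₂ ∧ b = ℓ₁)) (hℓ₁ : 1 ≤ ℓ₁) (hℓ₂ : 1 ≤ ℓ₂)
include hab hℓ₁ hℓ₂

lemma PairInvariant.totalDeg_ne_zero_left (h : PairInvariant ℓ₁ ℓ₂ a b u v) :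
    u.1 + u.2 ≠ 0 := by
  apply totalDeg_ne_zero_of_quadForm <;> rw [h.1] <;> rcases hab with ⟨rfl, rfl⟩ | ⟨rfl, rfl⟩ <;>
    nlinarith

lemma PairInvariant.totalDeg_ne_zero_right (h : PairInvariant ℓ₁ ℓ₂ a b u v) :
    v.1 + v.2 ≠ 0 :=
  h.symm.totalDeg_ne_zero_left (hab.symm.imp And.symm And.symm) hℓ₁ hℓ₂

lemma PairInvariant.next (h : PairInvariant ℓ₁ ℓ₂ a b u v) :
    PairInvariant ℓ₁ ℓ₂ b a v (nextExponent a u v) := by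
  have hu := h.totalDeg_ne_zero_left hab hℓ₁ hℓ₂
  have hv := h.totalDeg_ne_zero_right hab hℓ₁ hℓ₂
  obtain ⟨hqu, hqv, huv⟩ := h
  have hq : quadForm ℓ₁ ℓ₂ (a • v - u) =
      a ^ 2 * quadForm ℓ₁ ℓ₂ v + quadForm ℓ₁ ℓ₂ u - a * polarForm ℓ₁ ℓ₂ u v := by
    simp only [polarForm, quadForm, Prod.fst_add, Prod.snd_add, Prod.fst_sub, Prod.snd_sub,
      Prod.smul_fst, Prod.smul_snd]
    simp only [nsmul_eq_mul]
    ring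
  have hp : polarForm ℓ₁ ℓ₂ v (a • v - u) = 2 * a * quadForm ℓ₁ ℓ₂ v - polarForm ℓ₁ ℓ₂ u v := by
    simp only [polarForm, quadForm, Prod.fst_add, Prod.snd_add, Prod.fst_sub, Prod.snd_sub,
      Prod.smul_fst, Prod.smul_snd]
    simp only [nsmul_eq_mul]
    ring
  have hq' : quadForm ℓ₁ ℓ₂ (-u) = quadForm ℓ₁ ℓ₂ u := by
    simp only [quadForm, Prod.fst_neg, Prod.snd_neg]
    ring
  have hp' : polarForm ℓ₁ ℓ₂ v (-u) = -polarForm ℓ₁ ℓ₂ u v := by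
    simp only [polarForm, quadForm, Prod.fst_add, Prod.snd_add, Prod.fst_neg, Prod.snd_neg]
    ring
  unfold nextExponent
  split_ifs with hvneg
  · rw [if_neg (by omega)] at huv
    refine ⟨hqv, by rw [hq, hqv, hqu, huv]; ring, ?_⟩
    rw [hp, hqv, huv, if_neg (by omega)]
    ring
  · refine ⟨hqv, by rw [hq', hqu], ?_⟩
    rw [hp', huv]
    simp only [Prod.fst_neg, Prod.snd_neg]
    by_cases hupos : 0 < u.1 + u.2
    · rw [if_pos ⟨hupos, by omega⟩, if_neg (by omega)]
      ring
    · rw [if_neg (by omega), if_pos ⟨by omega, by omega⟩]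
      ring

end Exponents

section Laurent

variable (K : Type) [Field K]

lemma algebraicIndependent_ev : AlgebraicIndependent K (ev K) :=
  (MvPolynomial.algebraicIndependent_X Vars K).map'
    (f := IsScalarTower.toAlgHom K (MvPolynomial Vars K) (FF K)) (IsFractionRing.injective _ _)

lemma ev_ne_zero (v : Vars) : ev K v ≠ 0 := (algebraicIndependent_ev K).ne_zero v

lemma p_ne_zero (i : Fin 2) (j : ℕ) : p K i j ≠ 0 := ev_ne_zero K _

abbrev CoeffField : IntermediateField K (FF K) :=
  IntermediateField.adjoin K (Set.range fun q => ev K (.inl q))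

lemma algebraicIndependent_x : AlgebraicIndependent (CoeffField K) ![x1 K, x2 K] := by
  have h := (algebraicIndependent_ev K).comp Sum.swap Sum.swap_leftInverse.injective
  rw [show ev K ∘ Sum.swap = Sum.elim (fun i => ev K (.inr i)) fun q => ev K (.inl q) by
    ext (_ | _) <;> rfl] at h
  convert IntermediateField.algebraicIndependent_adjoin_iff.2
    (AlgebraicIndependent.sumElim_iff.1 h).2 using 1
  funext i
  fin_cases i <;> rfl

variable (ℓ₁ ℓ₂ : ℕ)

lemma coeffRing_le_coeffField : CoeffRing K ℓ₁ ℓ₂ ≤ (CoeffField K).toSubalgebra.toSubring := by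
  have hp : ∀ i j, p K i j ∈ CoeffField K := fun i j =>
    IntermediateField.subset_adjoin _ _ ⟨(i, j), rfl⟩
  refine Subring.closure_le.2 ?_
  rintro z ((⟨c, rfl⟩ | ⟨j, -, rfl⟩ | ⟨j, -, rfl⟩) | rfl | rfl) <;>
    simp only [SetLike.mem_coe, IntermediateField.mem_toSubalgebra, Subalgebra.mem_toSubring]
  · rw [← MvPolynomial.algebraMap_eq, ← IsScalarTower.algebraMap_apply]
    exact IntermediateField.algebraMap_mem _ c
  all_goals first | exact hp _ _ | exact inv_mem (hp _ _)

abbrev LaurentPoly := AddMonoidAlgebra (CoeffRing K ℓ₁ ℓ₂) (ℤ × ℤ)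

def monomialHom : Multiplicative (ℤ × ℤ) →* FF K where
  toFun d := x1 K ^ d.toAdd.1 * x2 K ^ d.toAdd.2
  map_one' := by simp
  map_mul' a b := by
    simp only [toAdd_mul, Prod.fst_add, Prod.snd_add, zpow_add₀ (ev_ne_zero K _), x1, x2]
    ring

def laurentEval : LaurentPoly K ℓ₁ ℓ₂ →ₐ[CoeffRing K ℓ₁ ℓ₂] FF K :=
  AddMonoidAlgebra.lift _ _ _ (monomialHom K)

lemma laurentEval_apply (F : LaurentPoly K ℓ₁ ℓ₂) :
    laurentEval K ℓ₁ ℓ₂ F =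
      ∑ d ∈ F.coeff.support, (F.coeff d : FF K) * x1 K ^ d.1 * x2 K ^ d.2 := by
  simp only [laurentEval, AddMonoidAlgebra.lift_apply, Finsupp.sum, Algebra.smul_def, mul_assoc]
  rfl

lemma laurentEval_injective : Function.Injective (laurentEval K ℓ₁ ℓ₂) := by
  have hli := (algebraicIndependent_x K).linearIndependent_zpow_mul_zpow
  rw [linearIndependent_iff'] at hli
  refine (injective_iff_map_eq_zero (laurentEval K ℓ₁ ℓ₂)).2 fun F hF => ?_
  have hc := hli F.coeff.support
    (fun d => ⟨F.coeff d, coeffRing_le_coeffField K ℓ₁ ℓ₂ (F.coeff d).2⟩) ?_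
  · rw [← AddMonoidAlgebra.coeff_eq_zero, ← Finsupp.support_eq_empty,
      Finset.eq_empty_iff_forall_notMem]
    intro d hd
    exact Finsupp.mem_support_iff.1 hd (Subtype.ext (congrArg Subtype.val (hc d hd) :))
  · rw [laurentEval_apply] at hF
    rw [← hF]
    refine Finset.sum_congr rfl fun d _ => ?_
    rw [IntermediateField.smul_def, mul_assoc]
    rfl

def totalDeg : ℤ × ℤ →+ ℤ := AddMonoidHom.coprod (AddMonoidHom.id ℤ) (AddMonoidHom.id ℤ)

def pMonomials : Subgroup (CoeffRing K ℓ₁ ℓ₂)ˣ where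
  carrier := {u | ∃ a b : ℤ, ((u : CoeffRing K ℓ₁ ℓ₂) : FF K) = p K 0 ℓ₁ ^ a * p K 1 ℓ₂ ^ b}
  mul_mem' := by
    rintro u v ⟨a, b, hu⟩ ⟨c, d, hv⟩
    refine ⟨a + c, b + d, ?_⟩
    rw [Units.val_mul, Subring.coe_mul, hu, hv, zpow_add₀ (p_ne_zero K _ _),
      zpow_add₀ (p_ne_zero K _ _)]
    ring
  one_mem' := ⟨0, 0, by simp⟩
  inv_mem' := by
    rintro u ⟨a, b, hu⟩
    refine ⟨-a, -b, ?_⟩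
    rw [zpow_neg, zpow_neg, ← mul_inv, ← hu]
    exact eq_inv_of_mul_eq_one_left (congrArg Subtype.val u.inv_mul)

def HasLowestTermAt (f : FF K) (e : ℤ × ℤ) : Prop :=
  ∃ F, laurentEval K ℓ₁ ℓ₂ F = f ∧ F.HasLowestTermIn totalDeg (pMonomials K ℓ₁ ℓ₂) e

variable {K ℓ₁ ℓ₂}

lemma p_zero_mem_coeffRing {j : ℕ} (hj : 1 ≤ j) (hjℓ : j ≤ ℓ₁) :
    p K 0 j ∈ CoeffRing K ℓ₁ ℓ₂ :=
  Subring.subset_closure (Or.inl (Or.inr (Or.inl ⟨j, ⟨hj, hjℓ⟩, rfl⟩)))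

lemma p_one_mem_coeffRing {j : ℕ} (hj : 1 ≤ j) (hjℓ : j ≤ ℓ₂) :
    p K 1 j ∈ CoeffRing K ℓ₁ ℓ₂ :=
  Subring.subset_closure (Or.inl (Or.inr (Or.inr ⟨j, ⟨hj, hjℓ⟩, rfl⟩)))

lemma inv_p_zero_mem_coeffRing : (p K 0 ℓ₁)⁻¹ ∈ CoeffRing K ℓ₁ ℓ₂ :=
  Subring.subset_closure (Or.inr (Set.mem_insert _ _))

lemma inv_p_one_mem_coeffRing : (p K 1 ℓ₂)⁻¹ ∈ CoeffRing K ℓ₁ ℓ₂ :=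
  Subring.subset_closure (Or.inr (Set.mem_insert_of_mem _ rfl))

lemma exists_mem_pMonomials (hℓ₁ : 1 ≤ ℓ₁) (hℓ₂ : 1 ≤ ℓ₂) (a b : ℤ) {c : CoeffRing K ℓ₁ ℓ₂}
    (hc : (c : FF K) = p K 0 ℓ₁ ^ a * p K 1 ℓ₂ ^ b) :
    ∃ u ∈ pMonomials K ℓ₁ ℓ₂, (u : CoeffRing K ℓ₁ ℓ₂) = c := by
  have hc0 : (c : FF K) ≠ 0 := by
    rw [hc]
    exact mul_ne_zero (zpow_ne_zero _ (p_ne_zero K _ _)) (zpow_ne_zero _ (p_ne_zero K _ _))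
  have hinv : (c : FF K)⁻¹ = p K 0 ℓ₁ ^ (-a) * p K 1 ℓ₂ ^ (-b) := by
    rw [hc, mul_inv, zpow_neg, zpow_neg]
  have hmem : (c : FF K)⁻¹ ∈ CoeffRing K ℓ₁ ℓ₂ := by
    rw [hinv]
    exact mul_mem
      (Subring.zpow_mem_of_inv_mem (CoeffRing K ℓ₁ ℓ₂) (p_zero_mem_coeffRing hℓ₁ le_rfl)
        inv_p_zero_mem_coeffRing _)
      (Subring.zpow_mem_of_inv_mem (CoeffRing K ℓ₁ ℓ₂) (p_one_mem_coeffRing hℓ₂ le_rfl)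
        inv_p_one_mem_coeffRing _)
  refine ⟨⟨c, ⟨_, hmem⟩, Subtype.ext ?_, Subtype.ext ?_⟩, ⟨a, b, hc⟩, rfl⟩
  · simp only [Subring.coe_mul, mul_inv_cancel₀ hc0, Subring.coe_one]
  · simp only [Subring.coe_mul, inv_mul_cancel₀ hc0, Subring.coe_one]

lemma HasLowestTermAt.ne_zero {f : FF K} {e : ℤ × ℤ} (h : HasLowestTermAt K ℓ₁ ℓ₂ f e) :
    f ≠ 0 := by
  obtain ⟨F, rfl, hF, -⟩ := h
  rw [← map_zero (laurentEval K ℓ₁ ℓ₂), (laurentEval_injective K ℓ₁ ℓ₂).ne_iff]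
  rintro rfl
  simpa using hF.1

lemma hasLowestTermAt_monomial (d : ℤ × ℤ) :
    HasLowestTermAt K ℓ₁ ℓ₂ (x1 K ^ d.1 * x2 K ^ d.2) d :=
  ⟨.single d 1, by simp [laurentEval, monomialHom],
    by simpa using AddMonoidAlgebra.hasLowestTermIn_single (pMonomials K ℓ₁ ℓ₂).one_mem d⟩

lemma HasLowestTermAt.mul {f g : FF K} {e e' : ℤ × ℤ} (hf : HasLowestTermAt K ℓ₁ ℓ₂ f e)
    (hg : HasLowestTermAt K ℓ₁ ℓ₂ g e') : HasLowestTermAt K ℓ₁ ℓ₂ (f * g) (e + e') := by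
  obtain ⟨F, rfl, hF⟩ := hf
  obtain ⟨G, rfl, hG⟩ := hg
  exact ⟨F * G, map_mul _ _ _, hF.mul hG⟩

lemma HasLowestTermAt.of_mul {g t : FF K} {e e' : ℤ × ℤ}
    (h : HasLowestTermAt K ℓ₁ ℓ₂ (g * t) e) (hg : HasLowestTermAt K ℓ₁ ℓ₂ g e')
    (ht : t ∈ Set.range (laurentEval K ℓ₁ ℓ₂)) : HasLowestTermAt K ℓ₁ ℓ₂ t (e - e') := by
  obtain ⟨T, rfl⟩ := ht
  obtain ⟨G, rfl, hG⟩ := hg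
  obtain ⟨GT, hGT, h⟩ := h
  rw [← map_mul] at hGT
  obtain rfl := laurentEval_injective K ℓ₁ ℓ₂ hGT
  exact ⟨T, rfl, h.of_mul hG⟩

variable {f : FF K} {e : ℤ × ℤ} {Q : (CoeffRing K ℓ₁ ℓ₂)[X]}

lemma HasLowestTermAt.aeval_of_totalDeg_neg (hf : HasLowestTermAt K ℓ₁ ℓ₂ f e)
    (he : e.1 + e.2 < 0)
    (hQ : ∃ u ∈ pMonomials K ℓ₁ ℓ₂, (u : CoeffRing K ℓ₁ ℓ₂) = Q.leadingCoeff) :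
    HasLowestTermAt K ℓ₁ ℓ₂ (aeval f Q) (Q.natDegree • e) := by
  obtain ⟨F, rfl, hF⟩ := hf
  exact ⟨_, (aeval_algHom_apply _ _ _).symm, hF.aeval_of_deg_neg he hQ⟩

lemma HasLowestTermAt.aeval_of_totalDeg_pos (hf : HasLowestTermAt K ℓ₁ ℓ₂ f e)
    (he : 0 < e.1 + e.2) (hQ : Q.coeff 0 = 1) :
    HasLowestTermAt K ℓ₁ ℓ₂ (aeval f Q) 0 := by
  obtain ⟨F, rfl, hF⟩ := hf
  exact ⟨_, (aeval_algHom_apply _ _ _).symm, hF.aeval_of_deg_pos he hQ⟩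

lemma hasLowestTermAt_of_monomial_mul_eq_aeval {g : FF K} {d : ℤ × ℤ}
    (hg : HasLowestTermAt K ℓ₁ ℓ₂ g e) (he : 0 < e.1 + e.2) (hQ : Q.coeff 0 = 1)
    (h : x1 K ^ d.1 * x2 K ^ d.2 * f = aeval g Q) : HasLowestTermAt K ℓ₁ ℓ₂ f (-d) := by
  have hf : f = aeval g Q * (x1 K ^ (-d).1 * x2 K ^ (-d).2) := by
    rw [← h, Prod.fst_neg, Prod.snd_neg, zpow_neg, zpow_neg]
    field_simp [ev_ne_zero, x1, x2]
  simpa [hf] using (hg.aeval_of_totalDeg_pos he hQ).mul (hasLowestTermAt_monomial (-d))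

lemma hasLowestTermAt_of_mul_eq_aeval {c d : FF K} {u v : ℤ × ℤ}
    (hc : HasLowestTermAt K ℓ₁ ℓ₂ c u) (hd : HasLowestTermAt K ℓ₁ ℓ₂ d v) (hv : v.1 + v.2 ≠ 0)
    (hf : f ∈ Set.range (laurentEval K ℓ₁ ℓ₂)) (h : f * c = aeval d Q) (hQ0 : Q.coeff 0 = 1)
    (hQ : ∃ w ∈ pMonomials K ℓ₁ ℓ₂, (w : CoeffRing K ℓ₁ ℓ₂) = Q.leadingCoeff) :
    HasLowestTermAt K ℓ₁ ℓ₂ f (nextExponent Q.natDegree u v) := by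
  unfold nextExponent
  split_ifs with hneg
  · have hQd := hd.aeval_of_totalDeg_neg hneg hQ
    rw [← h, mul_comm] at hQd
    exact hQd.of_mul hc hf
  · have hQd := hd.aeval_of_totalDeg_pos (by omega) hQ0
    rw [← h, mul_comm] at hQd
    simpa using hQd.of_mul hc hf

end Laurent

section ExchangePolynomial

variable {F : Type*} [Field F] (a : ℕ → F) (ℓ : ℕ)

def exchPoly : F[X] := 1 + ∑ j ∈ Finset.Icc 1 ℓ, C (a j) * X ^ j

def revExchPoly : F[X] := C (a ℓ)⁻¹ * reflect ℓ (exchPoly a ℓ)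

lemma eval_exchPoly (z : F) : (exchPoly a ℓ).eval z = 1 + ∑ j ∈ Finset.Icc 1 ℓ, a j * z ^ j := by
  simp [exchPoly, eval_finsetSum]

lemma coeff_exchPoly (n : ℕ) :
    (exchPoly a ℓ).coeff n = if n = 0 then 1 else if n ≤ ℓ then a n else 0 := by
  simp only [exchPoly, coeff_add, coeff_one, finsetSum_coeff, coeff_C_mul_X_pow]
  rw [Finset.sum_ite_eq]
  split_ifs <;> simp_all

lemma natDegree_exchPoly_le : (exchPoly a ℓ).natDegree ≤ ℓ := by
  rw [natDegree_le_iff_coeff_eq_zero]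
  intro n hn
  rw [coeff_exchPoly]
  split_ifs <;> first | rfl | omega

lemma eval_revExchPoly {z : F} (hz : z ≠ 0) :
    (revExchPoly a ℓ).eval z = (a ℓ)⁻¹ * z ^ ℓ * (1 + ∑ j ∈ Finset.Icc 1 ℓ, a j * z⁻¹ ^ j) := by
  have : Invertible z⁻¹ := invertibleOfNonzero (inv_ne_zero hz)
  have h := eval₂_reflect_mul_pow (RingHom.id F) z⁻¹ ℓ (exchPoly a ℓ) (natDegree_exchPoly_le a ℓ)
  rw [invOf_eq_inv, inv_inv, ← eval, ← eval, eval_exchPoly] at h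
  rw [revExchPoly, eval_mul, eval_C, ← h, inv_pow]
  field_simp

lemma coeff_exchPoly_zero : (exchPoly a ℓ).coeff 0 = 1 := by
  simp [coeff_exchPoly]

lemma coeff_revExchPoly (n : ℕ) :
    (revExchPoly a ℓ).coeff n = (a ℓ)⁻¹ * (exchPoly a ℓ).coeff (revAt ℓ n) := by
  rw [revExchPoly, coeff_C_mul, coeff_reflect]

lemma coeff_exchPoly_mem {S : Subring F} (ha : ∀ j, 1 ≤ j → j ≤ ℓ → a j ∈ S) (n : ℕ) :
    (exchPoly a ℓ).coeff n ∈ S := by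
  rw [coeff_exchPoly]
  split_ifs with h0 hℓ
  exacts [S.one_mem, ha n (Nat.one_le_iff_ne_zero.2 h0) hℓ, S.zero_mem]

lemma coeff_revExchPoly_mem {S : Subring F} (ha : ∀ j, 1 ≤ j → j ≤ ℓ → a j ∈ S)
    (hinv : (a ℓ)⁻¹ ∈ S) (n : ℕ) : (revExchPoly a ℓ).coeff n ∈ S := by
  rw [coeff_revExchPoly]
  exact S.mul_mem hinv (coeff_exchPoly_mem a ℓ ha _)

variable {a ℓ} (hℓ : 1 ≤ ℓ) (ha : a ℓ ≠ 0)
include hℓ ha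

lemma natDegree_exchPoly : (exchPoly a ℓ).natDegree = ℓ :=
  natDegree_eq_of_le_of_coeff_ne_zero (natDegree_exchPoly_le a ℓ) (by
    rwa [coeff_exchPoly, if_neg (by omega), if_pos le_rfl])

lemma leadingCoeff_exchPoly : (exchPoly a ℓ).leadingCoeff = a ℓ := by
  rw [leadingCoeff, natDegree_exchPoly hℓ ha, coeff_exchPoly, if_neg (by omega), if_pos le_rfl]

lemma coeff_revExchPoly_zero : (revExchPoly a ℓ).coeff 0 = 1 := by
  rw [coeff_revExchPoly, revAt_le (Nat.zero_le _), Nat.sub_zero, coeff_exchPoly,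
    if_neg (by omega), if_pos le_rfl, inv_mul_cancel₀ ha]

lemma natDegree_revExchPoly : (revExchPoly a ℓ).natDegree = ℓ := by
  refine natDegree_eq_of_le_of_coeff_ne_zero ?_ ?_
  · rw [natDegree_le_iff_coeff_eq_zero]
    intro n hn
    rw [coeff_revExchPoly, revAt_eq_self_of_lt hn, coeff_exchPoly, if_neg (by omega),
      if_neg (by omega), mul_zero]
  · rw [coeff_revExchPoly, revAt_le le_rfl, Nat.sub_self, coeff_exchPoly_zero, mul_one]
    exact inv_ne_zero ha

lemma leadingCoeff_revExchPoly : (revExchPoly a ℓ).leadingCoeff = (a ℓ)⁻¹ := by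
  rw [leadingCoeff, natDegree_revExchPoly hℓ ha, coeff_revExchPoly, revAt_le le_rfl,
    Nat.sub_self, coeff_exchPoly_zero, mul_one]

omit hℓ in
lemma exchPoly_eq_C_mul_reflect : exchPoly a ℓ = C (a ℓ) * reflect ℓ (revExchPoly a ℓ) := by
  rw [revExchPoly, reflect_C_mul, reflect_reflect, ← mul_assoc, ← C_mul, mul_inv_cancel₀ ha,
    C_1, one_mul]

end ExchangePolynomial

section Exchange

variable (K : Type) [Field K] (ℓ₁ ℓ₂ : ℕ)

def exchangePoly (k : ℤ) : (FF K)[X] :=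
  if k % 4 = 1 then exchPoly (p K 0) ℓ₁
  else if k % 4 = 2 then exchPoly (p K 1) ℓ₂
  else if k % 4 = 3 then revExchPoly (p K 0) ℓ₁
  else revExchPoly (p K 1) ℓ₂

def stepDeg (k : ℤ) : ℕ := if k % 2 = 1 then ℓ₁ else ℓ₂

variable {K ℓ₁ ℓ₂}

lemma IsPreVarSeq.mul_eq_eval {x : ℤ → FF K} (hx : IsPreVarSeq K ℓ₁ ℓ₂ x) {k : ℤ}
    (hk : x k ≠ 0) : x (k + 1) * x (k - 1) = (exchangePoly K ℓ₁ ℓ₂ k).eval (x k) := by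
  rw [hx.2.2 k, exchangePoly]
  split_ifs <;> simp only [P1, P2, P1bar, P2bar, eval_exchPoly, eval_revExchPoly _ _ hk]

lemma coeff_exchangePoly_mem (k : ℤ) (n : ℕ) :
    (exchangePoly K ℓ₁ ℓ₂ k).coeff n ∈ CoeffRing K ℓ₁ ℓ₂ := by
  rw [exchangePoly]
  split_ifs
  · exact coeff_exchPoly_mem (S := CoeffRing K ℓ₁ ℓ₂) (p K 0) ℓ₁ (fun _ => p_zero_mem_coeffRing) n
  · exact coeff_exchPoly_mem (S := CoeffRing K ℓ₁ ℓ₂) (p K 1) ℓ₂ (fun _ => p_one_mem_coeffRing) n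
  · exact coeff_revExchPoly_mem (S := CoeffRing K ℓ₁ ℓ₂) (p K 0) ℓ₁
      (fun _ => p_zero_mem_coeffRing) inv_p_zero_mem_coeffRing n
  · exact coeff_revExchPoly_mem (S := CoeffRing K ℓ₁ ℓ₂) (p K 1) ℓ₂
      (fun _ => p_one_mem_coeffRing) inv_p_one_mem_coeffRing n

section Residues

variable {k : ℤ}

lemma exchangePoly_of_emod_four_eq_one (hk : k % 4 = 1) :
    exchangePoly K ℓ₁ ℓ₂ k = exchPoly (p K 0) ℓ₁ := by
  simp [exchangePoly, hk]

lemma exchangePoly_of_emod_four_eq_two (hk : k % 4 = 2) :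
    exchangePoly K ℓ₁ ℓ₂ k = exchPoly (p K 1) ℓ₂ := by
  simp [exchangePoly, hk]

lemma exchangePoly_of_emod_four_eq_three (hk : k % 4 = 3) :
    exchangePoly K ℓ₁ ℓ₂ k = revExchPoly (p K 0) ℓ₁ := by
  simp [exchangePoly, hk]

lemma exchangePoly_of_emod_four_eq_zero (hk : k % 4 = 0) :
    exchangePoly K ℓ₁ ℓ₂ k = revExchPoly (p K 1) ℓ₂ := by
  simp [exchangePoly, hk]

lemma stepDeg_congr {j : ℤ} (h : j % 2 = k % 2) : stepDeg ℓ₁ ℓ₂ j = stepDeg ℓ₁ ℓ₂ k := by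
  rw [stepDeg, stepDeg, h]

lemma stepDeg_cases : (stepDeg ℓ₁ ℓ₂ k = ℓ₁ ∧ stepDeg ℓ₁ ℓ₂ (k + 1) = ℓ₂) ∨
    (stepDeg ℓ₁ ℓ₂ k = ℓ₂ ∧ stepDeg ℓ₁ ℓ₂ (k + 1) = ℓ₁) := by
  unfold stepDeg
  split_ifs <;> first | (left; exact ⟨rfl, rfl⟩) | (right; exact ⟨rfl, rfl⟩) | omega

lemma stepDeg_of_odd (hk : k % 2 = 1) : stepDeg ℓ₁ ℓ₂ k = ℓ₁ := if_pos hk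

lemma stepDeg_of_even (hk : k % 2 = 0) : stepDeg ℓ₁ ℓ₂ k = ℓ₂ := if_neg (by omega)

end Residues

variable (hℓ₁ : 1 ≤ ℓ₁) (hℓ₂ : 1 ≤ ℓ₂)
include hℓ₁ hℓ₂

lemma natDegree_exchangePoly (k : ℤ) :
    (exchangePoly K ℓ₁ ℓ₂ k).natDegree = stepDeg ℓ₁ ℓ₂ k := by
  rcases (by omega : k % 4 = 0 ∨ k % 4 = 1 ∨ k % 4 = 2 ∨ k % 4 = 3) with hk | hk | hk | hk
  · rw [exchangePoly_of_emod_four_eq_zero hk, stepDeg_of_even (by omega),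
      natDegree_revExchPoly hℓ₂ (p_ne_zero K _ _)]
  · rw [exchangePoly_of_emod_four_eq_one hk, stepDeg_of_odd (by omega),
      natDegree_exchPoly hℓ₁ (p_ne_zero K _ _)]
  · rw [exchangePoly_of_emod_four_eq_two hk, stepDeg_of_even (by omega),
      natDegree_exchPoly hℓ₂ (p_ne_zero K _ _)]
  · rw [exchangePoly_of_emod_four_eq_three hk, stepDeg_of_odd (by omega),
      natDegree_revExchPoly hℓ₁ (p_ne_zero K _ _)]

lemma coeff_zero_exchangePoly (k : ℤ) : (exchangePoly K ℓ₁ ℓ₂ k).coeff 0 = 1 := by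
  rcases (by omega : k % 4 = 0 ∨ k % 4 = 1 ∨ k % 4 = 2 ∨ k % 4 = 3) with hk | hk | hk | hk
  · rw [exchangePoly_of_emod_four_eq_zero hk, coeff_revExchPoly_zero hℓ₂ (p_ne_zero K _ _)]
  · rw [exchangePoly_of_emod_four_eq_one hk, coeff_exchPoly_zero]
  · rw [exchangePoly_of_emod_four_eq_two hk, coeff_exchPoly_zero]
  · rw [exchangePoly_of_emod_four_eq_three hk, coeff_revExchPoly_zero hℓ₁ (p_ne_zero K _ _)]

lemma leadingCoeff_exchangePoly (k : ℤ) :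
    ∃ a b : ℤ, (exchangePoly K ℓ₁ ℓ₂ k).leadingCoeff = p K 0 ℓ₁ ^ a * p K 1 ℓ₂ ^ b := by
  rcases (by omega : k % 4 = 0 ∨ k % 4 = 1 ∨ k % 4 = 2 ∨ k % 4 = 3) with hk | hk | hk | hk
  · rw [exchangePoly_of_emod_four_eq_zero hk, leadingCoeff_revExchPoly hℓ₂ (p_ne_zero K _ _)]
    exact ⟨0, -1, by simp⟩
  · rw [exchangePoly_of_emod_four_eq_one hk, leadingCoeff_exchPoly hℓ₁ (p_ne_zero K _ _)]
    exact ⟨1, 0, by simp⟩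
  · rw [exchangePoly_of_emod_four_eq_two hk, leadingCoeff_exchPoly hℓ₂ (p_ne_zero K _ _)]
    exact ⟨0, 1, by simp⟩
  · rw [exchangePoly_of_emod_four_eq_three hk, leadingCoeff_revExchPoly hℓ₁ (p_ne_zero K _ _)]
    exact ⟨-1, 0, by simp⟩

lemma exchangePoly_eq_C_mul_reflect {j k : ℤ} (hjk : j % 4 = (k + 2) % 4) :
    ∃ c ∈ CoeffRing K ℓ₁ ℓ₂,
      exchangePoly K ℓ₁ ℓ₂ j = C c * reflect (stepDeg ℓ₁ ℓ₂ k) (exchangePoly K ℓ₁ ℓ₂ k) := by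
  rcases (by omega : k % 4 = 0 ∨ k % 4 = 1 ∨ k % 4 = 2 ∨ k % 4 = 3) with hk | hk | hk | hk
  · rw [exchangePoly_of_emod_four_eq_two (by omega), exchangePoly_of_emod_four_eq_zero hk,
      stepDeg_of_even (by omega)]
    exact ⟨_, p_one_mem_coeffRing hℓ₂ le_rfl, exchPoly_eq_C_mul_reflect (p_ne_zero K _ _)⟩
  · rw [exchangePoly_of_emod_four_eq_three (by omega), exchangePoly_of_emod_four_eq_one hk,
      stepDeg_of_odd (by omega)]
    exact ⟨_, inv_p_zero_mem_coeffRing, rfl⟩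
  · rw [exchangePoly_of_emod_four_eq_zero (by omega), exchangePoly_of_emod_four_eq_two hk,
      stepDeg_of_even (by omega)]
    exact ⟨_, inv_p_one_mem_coeffRing, rfl⟩
  · rw [exchangePoly_of_emod_four_eq_one (by omega), exchangePoly_of_emod_four_eq_three hk,
      stepDeg_of_odd (by omega)]
    exact ⟨_, p_zero_mem_coeffRing hℓ₁ le_rfl, exchPoly_eq_C_mul_reflect (p_ne_zero K _ _)⟩

end Exchange

section Lift

variable (K : Type) [Field K] (ℓ₁ ℓ₂ : ℕ)

def exchangePolyLift (k : ℤ) : (CoeffRing K ℓ₁ ℓ₂)[X] :=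
  (exchangePoly K ℓ₁ ℓ₂ k).toSubring _ fun _ hc => by
    obtain ⟨n, -, rfl⟩ := mem_coeffs_iff.1 hc
    exact coeff_exchangePoly_mem k n

variable {K ℓ₁ ℓ₂}

lemma map_exchangePolyLift (k : ℤ) :
    (exchangePolyLift K ℓ₁ ℓ₂ k).map (CoeffRing K ℓ₁ ℓ₂).subtype = exchangePoly K ℓ₁ ℓ₂ k :=
  map_toSubring _ _ _

lemma aeval_exchangePolyLift (k : ℤ) (z : FF K) :
    aeval z (exchangePolyLift K ℓ₁ ℓ₂ k) = (exchangePoly K ℓ₁ ℓ₂ k).eval z := by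
  rw [aeval_def, eval₂_eq_eval_map, ← map_exchangePolyLift k]
  rfl

variable (hℓ₁ : 1 ≤ ℓ₁) (hℓ₂ : 1 ≤ ℓ₂)
include hℓ₁ hℓ₂

lemma natDegree_exchangePolyLift (k : ℤ) :
    (exchangePolyLift K ℓ₁ ℓ₂ k).natDegree = stepDeg ℓ₁ ℓ₂ k := by
  rw [← natDegree_exchangePoly (K := K) hℓ₁ hℓ₂ k, ← map_exchangePolyLift k,
    natDegree_map_eq_of_injective Subtype.val_injective]

lemma coeff_zero_exchangePolyLift (k : ℤ) : (exchangePolyLift K ℓ₁ ℓ₂ k).coeff 0 = 1 :=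
  Subtype.ext ((coeff_toSubring _ _ _).trans (coeff_zero_exchangePoly (K := K) hℓ₁ hℓ₂ k))

lemma leadingCoeff_exchangePolyLift_mem (k : ℤ) :
    ∃ u ∈ pMonomials K ℓ₁ ℓ₂,
      (u : CoeffRing K ℓ₁ ℓ₂) = (exchangePolyLift K ℓ₁ ℓ₂ k).leadingCoeff := by
  obtain ⟨a, b, h⟩ := leadingCoeff_exchangePoly (K := K) hℓ₁ hℓ₂ k
  refine exists_mem_pMonomials hℓ₁ hℓ₂ a b ?_
  rw [← h, ← map_exchangePolyLift k, leadingCoeff_map_of_injective Subtype.val_injective]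
  rfl

lemma exchangePolyLift_eq_C_mul_reflect {j k : ℤ} (hjk : j % 4 = (k + 2) % 4) :
    ∃ c, exchangePolyLift K ℓ₁ ℓ₂ j =
      C c * reflect (stepDeg ℓ₁ ℓ₂ k) (exchangePolyLift K ℓ₁ ℓ₂ k) := by
  obtain ⟨c, hc, h⟩ := exchangePoly_eq_C_mul_reflect (K := K) hℓ₁ hℓ₂ hjk
  refine ⟨⟨c, hc⟩, map_injective (CoeffRing K ℓ₁ ℓ₂).subtype Subtype.val_injective ?_⟩
  rw [map_exchangePolyLift, Polynomial.map_mul, map_C, ← reflect_map, map_exchangePolyLift, h]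
  rfl

end Lift

section Sequence

variable {K : Type} [Field K] {ℓ₁ ℓ₂ : ℕ} {x : ℤ → FF K}

lemma IsPreVarSeq.mul_eq_aeval (hx : IsPreVarSeq K ℓ₁ ℓ₂ x) {s : ℤ} (hs : s = 1 ∨ s = -1)
    {k : ℤ} (hk : x k ≠ 0) :
    x (k + s) * x (k - s) = aeval (x k) (exchangePolyLift K ℓ₁ ℓ₂ k) := by
  rw [aeval_exchangePolyLift, ← hx.mul_eq_eval hk]
  rcases hs with rfl | rfl
  · rfl
  · rw [mul_comm, sub_neg_eq_add, ← sub_eq_add_neg]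

variable (K ℓ₁ ℓ₂) in
def Window (x : ℤ → FF K) (s k : ℤ) : Prop :=
  (∃ e, HasLowestTermAt K ℓ₁ ℓ₂ (x k) e) ∧ (∃ e, HasLowestTermAt K ℓ₁ ℓ₂ (x (k + s)) e) ∧
    ∃ u v, HasLowestTermAt K ℓ₁ ℓ₂ (x (k + 2 * s)) u ∧ HasLowestTermAt K ℓ₁ ℓ₂ (x (k + 3 * s)) v ∧
      PairInvariant ℓ₁ ℓ₂ (stepDeg ℓ₁ ℓ₂ (k + 3 * s)) (stepDeg ℓ₁ ℓ₂ (k + 3 * s + 1)) u v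

variable (hx : IsPreVarSeq K ℓ₁ ℓ₂ x) (hℓ₁ : 1 ≤ ℓ₁) (hℓ₂ : 1 ≤ ℓ₂)
include hx hℓ₁ hℓ₂

section Step

variable {s : ℤ} (hs : s = 1 ∨ s = -1)
include hs

lemma Window.mem_range {k : ℤ} (hW : Window K ℓ₁ ℓ₂ x s k) :
    x (k + 4 * s) ∈ Set.range (laurentEval K ℓ₁ ℓ₂) := by
  obtain ⟨⟨_, ha⟩, ⟨_, hb⟩, u, v, hc, hd, -⟩ := hW
  have hb0 := hb.ne_zero
  have hc0 := hc.ne_zero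
  have hd0 := hd.ne_zero
  obtain ⟨A, hA, -⟩ := ha
  obtain ⟨B, hB, -⟩ := hb
  obtain ⟨C, hC, -⟩ := hc
  obtain ⟨D, hD, -⟩ := hd
  have h1 := hx.mul_eq_aeval hs hb0
  have h2 := hx.mul_eq_aeval hs hc0
  have h3 := hx.mul_eq_aeval hs hd0
  rw [show k + s + s = k + 2 * s by ring, show k + s - s = k by ring] at h1
  rw [show k + 2 * s + s = k + 3 * s by ring, show k + 2 * s - s = k + s by ring] at h2
  rw [show k + 3 * s + s = k + 4 * s by ring, show k + 3 * s - s = k + 2 * s by ring] at h3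
  have H1 : C * A = aeval B (exchangePolyLift K ℓ₁ ℓ₂ (k + s)) :=
    laurentEval_injective K ℓ₁ ℓ₂ (by rw [map_mul, ← aeval_algHom_apply, hA, hB, hC, h1])
  have H2 : D * B = aeval C (exchangePolyLift K ℓ₁ ℓ₂ (k + 2 * s)) :=
    laurentEval_injective K ℓ₁ ℓ₂ (by rw [map_mul, ← aeval_algHom_apply, hB, hC, hD, h2])
  obtain ⟨γ, hγ⟩ := exchangePolyLift_eq_C_mul_reflect (K := K) hℓ₁ hℓ₂ (j := k + 3 * s) (k := k + s)
    (by rcases hs with rfl | rfl <;> omega)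
  obtain ⟨T, hT⟩ := dvd_aeval_reflect H2 (coeff_zero_exchangePolyLift hℓ₁ hℓ₂ _) H1
    (natDegree_exchangePolyLift hℓ₁ hℓ₂ _).le
  refine ⟨algebraMap _ _ γ * T, mul_right_cancel₀ hc0 ?_⟩
  rw [h3, ← hD, ← hC, ← map_mul, aeval_algHom_apply]
  congr 1
  rw [hγ, map_mul, aeval_C, hT]
  ring

lemma Window.next {k : ℤ} (hW : Window K ℓ₁ ℓ₂ x s k) : Window K ℓ₁ ℓ₂ x s (k + s) := by
  have he := hW.mem_range hx hℓ₁ hℓ₂ hs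
  obtain ⟨-, hb, u, v, hc, hd, hI⟩ := hW
  have hab := stepDeg_cases (ℓ₁ := ℓ₁) (ℓ₂ := ℓ₂) (k := k + 3 * s)
  have h3 := hx.mul_eq_aeval hs hd.ne_zero
  rw [show k + 3 * s + s = k + 4 * s by ring, show k + 3 * s - s = k + 2 * s by ring] at h3
  have hw := hasLowestTermAt_of_mul_eq_aeval hc hd (hI.totalDeg_ne_zero_right hab hℓ₁ hℓ₂) he h3
    (coeff_zero_exchangePolyLift hℓ₁ hℓ₂ _) (leadingCoeff_exchangePolyLift_mem hℓ₁ hℓ₂ _)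
  rw [natDegree_exchangePolyLift hℓ₁ hℓ₂] at hw
  have hI' := hI.next hab hℓ₁ hℓ₂
  unfold Window
  rw [show k + s + s = k + 2 * s by ring, show k + s + 2 * s = k + 3 * s by ring,
    show k + s + 3 * s = k + 4 * s by ring]
  refine ⟨hb, ⟨u, hc⟩, v, _, hd, hw, ?_⟩
  rwa [stepDeg_congr (j := k + 4 * s) (k := k + 3 * s + 1) (by rcases hs with rfl | rfl <;> omega),
    stepDeg_congr (j := k + 4 * s + 1) (k := k + 3 * s) (by rcases hs with rfl | rfl <;> omega)]

lemma Window.iterate {k : ℤ} (hW : Window K ℓ₁ ℓ₂ x s k) (n : ℕ) :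
    Window K ℓ₁ ℓ₂ x s (k + n * s) := by
  induction n with
  | zero => simpa using hW
  | succ n ih =>
    rw [Nat.cast_succ, add_one_mul, ← add_assoc]
    exact ih.next hx hℓ₁ hℓ₂ hs

end Step

lemma IsPreVarSeq.hasLowestTermAt_initial :
    HasLowestTermAt K ℓ₁ ℓ₂ (x 0) (0, -1) ∧ HasLowestTermAt K ℓ₁ ℓ₂ (x 1) (1, 0) ∧
      HasLowestTermAt K ℓ₁ ℓ₂ (x 2) (0, 1) ∧ HasLowestTermAt K ℓ₁ ℓ₂ (x 3) (-1, 0) := by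
  have h1 : HasLowestTermAt K ℓ₁ ℓ₂ (x 1) (1, 0) := by
    simpa [hx.1] using hasLowestTermAt_monomial (K := K) (ℓ₁ := ℓ₁) (ℓ₂ := ℓ₂) (1, 0)
  have h2 : HasLowestTermAt K ℓ₁ ℓ₂ (x 2) (0, 1) := by
    simpa [hx.2.1] using hasLowestTermAt_monomial (K := K) (ℓ₁ := ℓ₁) (ℓ₂ := ℓ₂) (0, 1)
  have r1 := hx.mul_eq_aeval (Or.inl rfl) h1.ne_zero
  have r2 := hx.mul_eq_aeval (Or.inl rfl) h2.ne_zero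
  norm_num at r1 r2
  refine ⟨?_, h1, h2, ?_⟩
  · simpa using hasLowestTermAt_of_monomial_mul_eq_aeval (d := (0, 1)) h1 one_pos
      (coeff_zero_exchangePolyLift hℓ₁ hℓ₂ 1) (by simpa [hx.2.1] using r1)
  · simpa using hasLowestTermAt_of_monomial_mul_eq_aeval (d := (1, 0)) h2 one_pos
      (coeff_zero_exchangePolyLift hℓ₁ hℓ₂ 2) (by simpa [hx.1, mul_comm] using r2)

lemma IsPreVarSeq.exists_hasLowestTermAt (k : ℤ) : ∃ e, HasLowestTermAt K ℓ₁ ℓ₂ (x k) e := by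
  obtain ⟨h0, h1, h2, h3⟩ := hx.hasLowestTermAt_initial hℓ₁ hℓ₂
  rcases le_or_gt 2 k with hk | hk
  · have hW : Window K ℓ₁ ℓ₂ x 1 0 :=
      ⟨⟨_, h0⟩, ⟨_, by simpa using h1⟩, _, _, by simpa using h2, by simpa using h3,
        by norm_num [PairInvariant, quadForm, polarForm, stepDeg]; ring⟩
    obtain ⟨-, -, u, -, hu, -⟩ := hW.iterate hx hℓ₁ hℓ₂ (Or.inl rfl) (k - 2).toNat
    exact ⟨u, by rwa [show 0 + ((k - 2).toNat : ℤ) * 1 + 2 * 1 = k by omega] at hu⟩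
  · have hW : Window K ℓ₁ ℓ₂ x (-1) 3 :=
      ⟨⟨_, h3⟩, ⟨_, by simpa using h2⟩, _, _, by simpa using h1, by simpa using h0,
        by norm_num [PairInvariant, quadForm, polarForm, stepDeg]; ring⟩
    obtain ⟨-, -, u, -, hu, -⟩ := hW.iterate hx hℓ₁ hℓ₂ (Or.inr rfl) (1 - k).toNat
    exact ⟨u, by rwa [show 3 + ((1 - k).toNat : ℤ) * -1 + 2 * -1 = k by omega] at hu⟩

end Sequence

theorem preVar_has_unique_min_term_and_normalization_general (K : Type) [Field K]
    (ℓ₁ ℓ₂ : ℕ) (hℓ₁ : 1 ≤ ℓ₁) (hℓ₂ : 1 ≤ ℓ₂)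
    (x : ℤ → FF K) (hx : IsPreVarSeq K ℓ₁ ℓ₂ x) :
    ∀ k : ℤ, ∃ (D : Finset (ℤ × ℤ)) (c : ℤ × ℤ → FF K) (d₀ : ℤ × ℤ) (a b : ℤ),
      (∀ d ∈ D, c d ≠ 0 ∧ c d ∈ CoeffRing K ℓ₁ ℓ₂) ∧
      x k = ∑ d ∈ D, c d * x1 K ^ d.1 * x2 K ^ d.2 ∧
      d₀ ∈ D ∧
      (∀ d ∈ D, d ≠ d₀ → d₀.1 + d₀.2 < d.1 + d.2) ∧
      p K 0 ℓ₁ ^ a * p K 1 ℓ₂ ^ b * c d₀ = 1 := by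
  intro k
  obtain ⟨e, F, hF, hlow, u, ⟨a, b, hu⟩, huF⟩ := hx.exists_hasLowestTermAt hℓ₁ hℓ₂ k
  refine ⟨F.coeff.support, fun d => F.coeff d, e, -a, -b,
    fun d hd => ⟨fun h => Finsupp.mem_support_iff.1 hd (Subtype.ext h), (F.coeff d).2⟩,
    by rw [← hF, laurentEval_apply], hlow.1, hlow.2, ?_⟩
  change _ * (F.coeff e : FF K) = 1
  rw [← huF, hu, zpow_neg, zpow_neg]
  field_simp [p_ne_zero]

/-- for each `k ∈ ℤ`, the cluster pre-variable `x_k`, regarded as a Laurent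
polynomial in `x₁, x₂` over `k[p_{1,1},…,p_{1,ℓ₁},p_{1,ℓ₁}^{-1},p_{2,1},…,p_{2,ℓ₂},p_{2,ℓ₂}^{-1}]`,
has a unique term of minimal total degree, and there exist integers `a_k, b_k` such that
`X_k = p_{1,ℓ₁}^{a_k}·p_{2,ℓ₂}^{b_k}·x_k` has this unique minimal total-degree term with
coefficient `1`.  (This makes the generalized cluster variables `X_k` well defined.) -/
theorem preVar_has_unique_min_term_and_normalization (K : Type) [Field K] [CharZero K]
    (ℓ₁ ℓ₂ : ℕ) (hℓ₁ : 1 ≤ ℓ₁) (hℓ₂ : 1 ≤ ℓ₂)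
    (x : ℤ → FF K) (hx : IsPreVarSeq K ℓ₁ ℓ₂ x) :
    ∀ k : ℤ, ∃ (D : Finset (ℤ × ℤ)) (c : ℤ × ℤ → FF K) (d₀ : ℤ × ℤ) (a b : ℤ),
      (∀ d ∈ D, c d ≠ 0 ∧ c d ∈ CoeffRing K ℓ₁ ℓ₂) ∧
      x k = ∑ d ∈ D, c d * x1 K ^ d.1 * x2 K ^ d.2 ∧
      d₀ ∈ D ∧
      (∀ d ∈ D, d ≠ d₀ → d₀.1 + d₀.2 < d.1 + d.2) ∧
      p K 0 ℓ₁ ^ a * p K 1 ℓ₂ ^ b * c d₀ = 1 :=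
  preVar_has_unique_min_term_and_normalization_general K ℓ₁ ℓ₂ hℓ₁ hℓ₂ x hx

end GCA
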